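/- arXiv:1112.2679 — 5 statements merged into one kernel-verified Lean document; each statement's English description precedes it below -/
import Mathlib

section
/- Let F be an index set with supp(x̄) ⊆ F and |F| = s, and assume ρ(E,s) ≤ Δλ/2. Then the ratio of the second largest (in absolute value) eigenvalue of the principal submatrix A_F to its largest eigenvalue is at most γ(s); that is, λ_1(A_F) > 0 and max_{j ≥ 2} |λ_j(A_F)| ≤ γ(s) · λ_1(A_F), where λ_1(A_F) ≥ λ_2(A_F) ≥ … are the eigenvalues of A_F in decreasing order. -/
/-!
Restrict to `F` and split `A_F = Ā_F + E_F`. Since `x̄` is supported in `F`, its restriction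
`x` is a unit vector with `xᵀ Ā_F x = λ`, and by compression the quadratic form of `Ā_F` is at
most `λ - Δλ` on `x^⊥` and at least `-(λ - Δλ)` everywhere. The perturbation `E_F` moves every
Rayleigh quotient by at most `ρ = ρ(E, s)`. Hence `λ₁(A_F) ≥ λ - ρ > 0`, while by Courant–Fischer
every other eigenvalue lies in `[-(λ - Δλ + ρ), λ - Δλ + ρ]`; `γ(s)` is the ratio of the bounds.
-/

namespace TPaper

noncomputable def nrm2 {p : ℕ} (x : Fin p → ℝ) : ℝ := Real.sqrt (∑ i, x i ^ 2)

def dotp {p : ℕ} (x y : Fin p → ℝ) : ℝ := ∑ i, x i * y i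

noncomputable def supp {p : ℕ} (x : Fin p → ℝ) : Finset (Fin p) :=
  Finset.univ.filter fun i => x i ≠ 0

def subm {p : ℕ} (A : Matrix (Fin p) (Fin p) ℝ) (F : Finset (Fin p)) :
    Matrix {i // i ∈ F} {i // i ∈ F} ℝ :=
  A.submatrix Subtype.val Subtype.val

noncomputable def specNorm {n : Type*} [Fintype n] [DecidableEq n]
    (B : Matrix n n ℝ) : ℝ :=
  sSup {r : ℝ | ∃ μ ∈ spectrum ℝ B, r = |μ|}

noncomputable def rhoRes {p : ℕ} (E : Matrix (Fin p) (Fin p) ℝ) (s : ℕ) : ℝ :=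
  sSup {r : ℝ | ∃ F : Finset (Fin p), F.card = s ∧ r = specNorm (subm E F)}

def Trunc {p : ℕ} (x : Fin p → ℝ) (F : Finset (Fin p)) : Fin p → ℝ :=
  fun i => if i ∈ F then x i else 0

def IsTopK {p : ℕ} (y : Fin p → ℝ) (k : ℕ) (F : Finset (Fin p)) : Prop :=
  F.card = k ∧ ∀ i ∈ F, ∀ j ∉ F, |y j| ≤ |y i|

noncomputable def maxEig {n : Type*} [Fintype n] [DecidableEq n]
    (B : Matrix n n ℝ) : ℝ :=
  sSup (spectrum ℝ B)

noncomputable def eigList {n : Type*} [Fintype n] [DecidableEq n] {B : Matrix n n ℝ}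
    (hB : B.IsHermitian) : List ℝ :=
  ((Finset.univ.val.map hB.eigenvalues).sort (· ≤ ·)).reverse

end TPaper

open Matrix Function

theorem OrthonormalBasis.sum_dotProduct_mul_dotProduct {ι n : Type*} [Fintype ι] [Fintype n]
    (b : OrthonormalBasis ι ℝ (EuclideanSpace ℝ n)) (v w : n → ℝ) :
    ∑ j, (b j ⬝ᵥ v) * (b j ⬝ᵥ w) = v ⬝ᵥ w := by
  simpa [EuclideanSpace.inner_toLp_toLp, EuclideanSpace.inner_eq_star_dotProduct,
    dotProduct_comm] using b.sum_inner_mul_inner (WithLp.toLp 2 v) (WithLp.toLp 2 w)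

theorem Function.extend_comp_eq_of_support_subset {α β γ : Type*} [Zero γ] {e : α → β}
    (he : Injective e) {x : β → γ} (hx : support x ⊆ Set.range e) : extend e (x ∘ e) 0 = x := by
  funext b
  by_cases hb : ∃ a, e a = b
  · obtain ⟨a, rfl⟩ := hb
    exact he.extend_apply _ _ a
  · rw [extend_apply' _ _ _ hb]
    exact (not_not.mp fun h => hb (hx h)).symm

namespace Matrix

section Extend

variable {R m n : Type*} [CommSemiring R] [Fintype m] [Fintype n] {e : m → n}

theorem extend_zero_dotProduct (he : Injective e) (u : m → R) (w : n → R) :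
    extend e u 0 ⬝ᵥ w = u ⬝ᵥ (w ∘ e) :=
  (Fintype.sum_of_injective e he _ _ (fun i hi => by simp [extend_apply' _ _ _ hi])
    (fun i => by simp [he.extend_apply])).symm

theorem dotProduct_submatrix_mulVec (he : Injective e) (A : Matrix n n R) (u : m → R) :
    u ⬝ᵥ A.submatrix e e *ᵥ u = extend e u 0 ⬝ᵥ A *ᵥ extend e u 0 := by
  rw [extend_zero_dotProduct he]
  congr 1
  funext i
  change (fun j => A (e i) (e j)) ⬝ᵥ u = (fun j => A (e i) j) ⬝ᵥ extend e u 0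
  rw [dotProduct_comm _ (extend e u 0), extend_zero_dotProduct he, dotProduct_comm]
  rfl

end Extend

namespace IsHermitian

variable {n : Type*} [Fintype n] [DecidableEq n] {M : Matrix n n ℝ} (hM : M.IsHermitian)

theorem eigenvectorBasis_dotProduct_mulVec (j : n) (v : n → ℝ) :
    hM.eigenvectorBasis j ⬝ᵥ M *ᵥ v = hM.eigenvalues j * (hM.eigenvectorBasis j ⬝ᵥ v) := by
  rw [dotProduct_mulVec, ← mulVec_transpose, (isHermitian_iff_isSymm.mp hM).eq,
    mulVec_eigenvectorBasis, smul_dotProduct, smul_eq_mul]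

theorem eigenvectorBasis_dotProduct_eigenvectorBasis (i j : n) :
    hM.eigenvectorBasis i ⬝ᵥ hM.eigenvectorBasis j = if i = j then 1 else 0 := by
  rw [← orthonormal_iff_ite.mp hM.eigenvectorBasis.orthonormal i j,
    EuclideanSpace.inner_eq_star_dotProduct, dotProduct_comm]
  simp

theorem dotProduct_mulVec_eq_sum (v : n → ℝ) :
    v ⬝ᵥ M *ᵥ v = ∑ j, hM.eigenvalues j * (hM.eigenvectorBasis j ⬝ᵥ v) ^ 2 := by
  rw [← hM.eigenvectorBasis.sum_dotProduct_mul_dotProduct]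
  refine Finset.sum_congr rfl fun j _ => ?_
  rw [eigenvectorBasis_dotProduct_mulVec hM]
  ring

theorem dotProduct_self_eq_sum (v : n → ℝ) :
    v ⬝ᵥ v = ∑ j, (hM.eigenvectorBasis j ⬝ᵥ v) ^ 2 := by
  rw [← hM.eigenvectorBasis.sum_dotProduct_mul_dotProduct]
  simp only [sq]

theorem dotProduct_mulVec_le {a : ℝ} (h : ∀ j, hM.eigenvalues j ≤ a) (v : n → ℝ) :
    v ⬝ᵥ M *ᵥ v ≤ a * (v ⬝ᵥ v) := by
  rw [hM.dotProduct_mulVec_eq_sum, hM.dotProduct_self_eq_sum, Finset.mul_sum]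
  exact Finset.sum_le_sum fun j _ => mul_le_mul_of_nonneg_right (h j) (sq_nonneg _)

theorem le_dotProduct_mulVec {a : ℝ} (h : ∀ j, a ≤ hM.eigenvalues j) (v : n → ℝ) :
    a * (v ⬝ᵥ v) ≤ v ⬝ᵥ M *ᵥ v := by
  rw [hM.dotProduct_mulVec_eq_sum, hM.dotProduct_self_eq_sum, Finset.mul_sum]
  exact Finset.sum_le_sum fun j _ => mul_le_mul_of_nonneg_right (h j) (sq_nonneg _)

theorem abs_dotProduct_mulVec_le {a : ℝ} (h : ∀ j, |hM.eigenvalues j| ≤ a) (v : n → ℝ) :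
    |v ⬝ᵥ M *ᵥ v| ≤ a * (v ⬝ᵥ v) := by
  refine abs_le.mpr ⟨?_, hM.dotProduct_mulVec_le (fun j => (abs_le.mp (h j)).2) v⟩
  simpa only [neg_mul] using hM.le_dotProduct_mulVec (fun j => (abs_le.mp (h j)).1) v

theorem eigenvectorBasis_dotProduct_mulVec_self (j : n) :
    hM.eigenvectorBasis j ⬝ᵥ M *ᵥ hM.eigenvectorBasis j = hM.eigenvalues j := by
  rw [eigenvectorBasis_dotProduct_mulVec, eigenvectorBasis_dotProduct_eigenvectorBasis,
    if_pos rfl, mul_one]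

theorem eigenvectorBasis_dotProduct_eq_zero_of_mulVec_eq_smul {x : n → ℝ} {μ : ℝ}
    (hx : M *ᵥ x = μ • x) {j : n} (hj : hM.eigenvalues j ≠ μ) :
    hM.eigenvectorBasis j ⬝ᵥ x = 0 := by
  have h := hM.eigenvectorBasis_dotProduct_mulVec j x
  rw [hx, dotProduct_smul, smul_eq_mul] at h
  exact (mul_eq_zero.mp (by linear_combination h : (μ - hM.eigenvalues j) *
    (hM.eigenvectorBasis j ⬝ᵥ x) = 0)).resolve_left (sub_ne_zero.mpr hj.symm)

theorem dotProduct_mulVec_le_of_dotProduct_eq_zero {i₀ : n} {x : n → ℝ}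
    (hx : M *ᵥ x = hM.eigenvalues i₀ • x) (hx₀ : x ≠ 0) {β : ℝ}
    (hβ : ∀ j, j ≠ i₀ → hM.eigenvalues j ≤ β) (hβi₀ : β < hM.eigenvalues i₀)
    {w : n → ℝ} (hw : w ⬝ᵥ x = 0) : w ⬝ᵥ M *ᵥ w ≤ β * (w ⬝ᵥ w) := by
  set c := fun j => hM.eigenvectorBasis j ⬝ᵥ x
  have hc : ∀ j, j ≠ i₀ → c j = 0 := fun j hj =>
    hM.eigenvectorBasis_dotProduct_eq_zero_of_mulVec_eq_smul hx ((hβ j hj).trans_lt hβi₀).ne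
  have hsum : ∀ f : n → ℝ, ∑ j, f j * c j = f i₀ * c i₀ := fun f =>
    Finset.sum_eq_single i₀ (fun j _ hj => by rw [hc j hj, mul_zero]) (by simp)
  have hci₀ : c i₀ ≠ 0 := by
    have h := hM.eigenvectorBasis.sum_dotProduct_mul_dotProduct x x
    rw [hsum] at h
    exact fun h0 => hx₀ (dotProduct_self_eq_zero.mp (by rw [← h, h0, mul_zero]))
  have hwi₀ : hM.eigenvectorBasis i₀ ⬝ᵥ w = 0 := by
    have h := hM.eigenvectorBasis.sum_dotProduct_mul_dotProduct w x
    rw [hsum, hw] at h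
    exact (mul_eq_zero.mp h).resolve_right hci₀
  rw [hM.dotProduct_mulVec_eq_sum, hM.dotProduct_self_eq_sum, Finset.mul_sum]
  refine Finset.sum_le_sum fun j _ => ?_
  by_cases hj : j = i₀
  · simp [hj, hwi₀]
  · exact mul_le_mul_of_nonneg_right (hβ j hj) (sq_nonneg _)

/-- Courant–Fischer in the form needed here: `span {e i, e j}` meets `x^⊥` nontrivially. -/
theorem min_eigenvalues_le {x : n → ℝ} {β : ℝ}
    (hperp : ∀ u, u ⬝ᵥ x = 0 → u ⬝ᵥ M *ᵥ u ≤ β * (u ⬝ᵥ u)) {i j : n} (hij : i ≠ j) :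
    min (hM.eigenvalues i) (hM.eigenvalues j) ≤ β := by
  set e := hM.eigenvectorBasis
  set a := e i ⬝ᵥ x
  set b := e j ⬝ᵥ x
  by_cases hab : a = 0 ∧ b = 0
  · have h := hperp (e i) hab.1
    rw [hM.eigenvectorBasis_dotProduct_mulVec_self,
      hM.eigenvectorBasis_dotProduct_eigenvectorBasis, if_pos rfl, mul_one] at h
    exact (min_le_left _ _).trans h
  have hpos : 0 < b ^ 2 + a ^ 2 := by
    rcases not_and_or.mp hab with h | h <;> positivity
  have hu := hperp (b • e i - a • e j) (by
    simp only [sub_dotProduct, smul_dotProduct, smul_eq_mul, a, b]; ring)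
  have hii := hM.eigenvectorBasis_dotProduct_eigenvectorBasis i i
  have hjj := hM.eigenvectorBasis_dotProduct_eigenvectorBasis j j
  have hij' := hM.eigenvectorBasis_dotProduct_eigenvectorBasis i j
  have hji := hM.eigenvectorBasis_dotProduct_eigenvectorBasis j i
  simp only [if_pos, if_neg hij, if_neg hij.symm] at hii hjj hij' hji
  simp only [mulVec_sub, mulVec_smul, hM.mulVec_eigenvectorBasis, sub_dotProduct, dotProduct_sub,
    smul_dotProduct, dotProduct_smul, smul_eq_mul, e, hii, hjj, hij', hji] at hu
  have hmin :
      (b ^ 2 + a ^ 2) * min (hM.eigenvalues i) (hM.eigenvalues j) ≤ (b ^ 2 + a ^ 2) * β := by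
    nlinarith [min_le_left (hM.eigenvalues i) (hM.eigenvalues j),
      min_le_right (hM.eigenvalues i) (hM.eigenvalues j), sq_nonneg a, sq_nonneg b]
  exact le_of_mul_le_mul_left hmin hpos

end IsHermitian

end Matrix

section SortDesc

variable {ι : Type*} [Fintype ι] (f : ι → ℝ)

theorem exists_of_sort_reverse_eq_cons [DecidableEq ι] {a : ℝ} {t : List ℝ}
    (h : ((Finset.univ.val.map f).sort (· ≤ ·)).reverse = a :: t) :
    ∃ i, f i = a ∧ (Finset.univ.val.erase i).map f = t ∧ ∀ b ∈ t, b ≤ a := by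
  have hsorted :=
    List.pairwise_reverse.mpr (Multiset.pairwise_sort (Finset.univ.val.map f) (· ≤ ·))
  have hmap : Finset.univ.val.map f = a ::ₘ (t : Multiset ℝ) := by
    rw [Multiset.cons_coe, ← h, Multiset.coe_reverse, Multiset.sort_eq]
  obtain ⟨i, -, hi, hrest⟩ := (Multiset.map_eq_cons _ _ _ _).mpr hmap
  rw [h, List.pairwise_cons] at hsorted
  exact ⟨i, hi, hrest, hsorted.1⟩

theorem le_headI_sort_reverse (j : ι) :
    f j ≤ ((Finset.univ.val.map f).sort (· ≤ ·)).reverse.headI := by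
  classical
  obtain ⟨a, t, h⟩ : ∃ a t, ((Finset.univ.val.map f).sort (· ≤ ·)).reverse = a :: t := by
    refine List.exists_cons_of_ne_nil fun h => ?_
    have := congrArg List.length h
    simp only [List.length_reverse, Multiset.length_sort, Multiset.card_map] at this
    exact Finset.univ_nonempty_iff.mpr ⟨j⟩ |>.card_pos.ne' this
  obtain ⟨i, rfl, hrest, hle⟩ := exists_of_sort_reverse_eq_cons f h
  rw [h, List.headI_cons]
  by_cases hji : j = i
  · rw [hji]
  · have hj : f j ∈ (Finset.univ.val.erase i).map f :=
      Multiset.mem_map_of_mem f ((Multiset.mem_erase_of_ne hji).mpr (Finset.mem_univ_val j))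
    rw [hrest, Multiset.mem_coe] at hj
    exact hle _ hj

theorem exists_ne_of_mem_tail_sort_reverse {r : ℝ}
    (hr : r ∈ ((Finset.univ.val.map f).sort (· ≤ ·)).reverse.tail) :
    ∃ i j, i ≠ j ∧ f i = ((Finset.univ.val.map f).sort (· ≤ ·)).reverse.headI ∧ f j = r := by
  classical
  obtain ⟨a, t, h⟩ := List.exists_cons_of_ne_nil fun h0 : ((Finset.univ.val.map f).sort
    (· ≤ ·)).reverse = [] => by simp [h0] at hr
  obtain ⟨i, hi, hrest, -⟩ := exists_of_sort_reverse_eq_cons f h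
  rw [h, List.tail_cons] at hr
  obtain ⟨j, hj, rfl⟩ := Multiset.mem_map.mp (hrest ▸ Multiset.mem_coe.mpr hr : r ∈ _)
  refine ⟨i, j, fun hij => ?_, by rw [h, List.headI_cons, hi], rfl⟩
  exact Finset.univ.nodup.notMem_erase (hij ▸ hj)

end SortDesc

namespace TPaper

theorem dotProduct_self_eq_nrm2_sq {p : ℕ} (x : Fin p → ℝ) : x ⬝ᵥ x = nrm2 x ^ 2 := by
  rw [nrm2, Real.sq_sqrt (Finset.sum_nonneg fun i _ => sq_nonneg (x i))]
  simp only [dotProduct, sq]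

theorem abs_eigenvalues_le_specNorm {n : Type*} [Fintype n] [DecidableEq n] {C : Matrix n n ℝ}
    (hC : C.IsHermitian) (j : n) : |hC.eigenvalues j| ≤ specNorm C := by
  refine le_csSup ((C.finite_real_spectrum.image (|·|)).bddAbove.mono ?_)
    ⟨_, hC.eigenvalues_mem_spectrum_real j, rfl⟩
  rintro _ ⟨μ, hμ, rfl⟩
  exact ⟨μ, hμ, rfl⟩

theorem specNorm_subm_le_rhoRes {p : ℕ} (E : Matrix (Fin p) (Fin p) ℝ) (F : Finset (Fin p)) :
    specNorm (subm E F) ≤ rhoRes E F.card := by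
  refine le_csSup ((Set.finite_range fun F' => specNorm (subm E F')).bddAbove.mono ?_)
    ⟨F, rfl, rfl⟩
  rintro _ ⟨F', -, rfl⟩
  exact ⟨F', rfl⟩

def IsGapCertificate {n : Type*} [Fintype n] (M : Matrix n n ℝ) (x : n → ℝ) (α β : ℝ) : Prop :=
  x ⬝ᵥ x = 1 ∧ α ≤ x ⬝ᵥ M *ᵥ x ∧ (∀ u, u ⬝ᵥ x = 0 → u ⬝ᵥ M *ᵥ u ≤ β * (u ⬝ᵥ u)) ∧
    ∀ u, -β * (u ⬝ᵥ u) ≤ u ⬝ᵥ M *ᵥ u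

namespace IsGapCertificate

variable {n : Type*} [Fintype n] {M : Matrix n n ℝ} {x : n → ℝ} {α β : ℝ}

theorem of_eigenvector [DecidableEq n] (hM : M.IsHermitian) {i₀ : n}
    (hx : M *ᵥ x = hM.eigenvalues i₀ • x) (hxx : x ⬝ᵥ x = 1) (hβ₀ : 0 ≤ β)
    (hβ : ∀ j, j ≠ i₀ → |hM.eigenvalues j| ≤ β) (hβi₀ : β < hM.eigenvalues i₀) :
    IsGapCertificate M x (hM.eigenvalues i₀) β := by
  refine ⟨hxx, by rw [hx, dotProduct_smul, hxx, smul_eq_mul, mul_one], fun u hu => ?_, ?_⟩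
  · exact hM.dotProduct_mulVec_le_of_dotProduct_eq_zero hx
      (fun h => by simp [h] at hxx) (fun j hj => (le_abs_self _).trans (hβ j hj)) hβi₀ hu
  · refine hM.le_dotProduct_mulVec fun j => ?_
    by_cases hj : j = i₀
    · rw [hj]; linarith
    · exact neg_le_of_abs_le (hβ j hj)

theorem submatrix {m : Type*} [Fintype m] (h : IsGapCertificate M x α β) {e : m → n}
    (he : Function.Injective e) (hx : Function.support x ⊆ Set.range e) :
    IsGapCertificate (M.submatrix e e) (x ∘ e) α β := by
  obtain ⟨hxx, hα, hperp, hlow⟩ := h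
  have hnorm (u : m → ℝ) : u ⬝ᵥ u = Function.extend e u 0 ⬝ᵥ Function.extend e u 0 := by
    rw [extend_zero_dotProduct he, Function.extend_comp he]
  refine ⟨?_, ?_, fun u hu => ?_, fun u => ?_⟩
  · rwa [← extend_zero_dotProduct he, Function.extend_comp_eq_of_support_subset he hx]
  · rwa [dotProduct_submatrix_mulVec he, Function.extend_comp_eq_of_support_subset he hx]
  · rw [dotProduct_submatrix_mulVec he, hnorm]
    exact hperp _ (by rwa [extend_zero_dotProduct he])
  · rw [dotProduct_submatrix_mulVec he, hnorm]
    exact hlow _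

theorem add (h : IsGapCertificate M x α β) {C : Matrix n n ℝ} {ρ : ℝ}
    (hC : ∀ u, |u ⬝ᵥ C *ᵥ u| ≤ ρ * (u ⬝ᵥ u)) :
    IsGapCertificate (M + C) x (α - ρ) (β + ρ) := by
  obtain ⟨hxx, hα, hperp, hlow⟩ := h
  refine ⟨hxx, ?_, fun u hu => ?_, fun u => ?_⟩ <;>
    simp only [add_mulVec, dotProduct_add]
  · have := (abs_le.mp (hC x)).1
    rw [hxx] at this
    linarith
  · linarith [(abs_le.mp (hC u)).2, hperp u hu]
  · linarith [(abs_le.mp (hC u)).1, hlow u]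

theorem eigList_bounds [DecidableEq n] (h : IsGapCertificate M x α β) (hM : M.IsHermitian) :
    α ≤ (eigList hM).headI ∧ ∀ r ∈ (eigList hM).tail, |r| ≤ β := by
  obtain ⟨hxx, hα, hperp, hlow⟩ := h
  have hn : Nonempty n := by
    by_contra hn
    simp [dotProduct, not_nonempty_iff.mp hn] at hxx
  refine ⟨?_, fun r hr => ?_⟩
  · have := hM.dotProduct_mulVec_le (le_headI_sort_reverse hM.eigenvalues) x
    rw [hxx, mul_one] at this
    exact hα.trans this
  · obtain ⟨i, j, hij, hi, rfl⟩ := exists_ne_of_mem_tail_sort_reverse hM.eigenvalues hr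
    have hji : hM.eigenvalues j ≤ hM.eigenvalues i := hi ▸ le_headI_sort_reverse _ j
    have hup := hM.min_eigenvalues_le hperp hij
    have hdown := hlow (hM.eigenvectorBasis j)
    rw [hM.eigenvectorBasis_dotProduct_mulVec_self,
      hM.eigenvectorBasis_dotProduct_eigenvectorBasis, if_pos rfl, mul_one] at hdown
    rw [min_eq_right hji] at hup
    exact abs_le.mpr ⟨hdown, hup⟩

end IsGapCertificate

theorem statement2_general (p s : ℕ)
    (Abar E : Matrix (Fin p) (Fin p) ℝ)
    (hAbar : Abar.IsHermitian) (hE : E.IsHermitian)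
    (lam dlam : ℝ) (i0 : Fin p)
    (hi0 : hAbar.eigenvalues i0 = lam)
    (hdlam_pos : 0 < dlam)
    (hgap_le : ∀ j, j ≠ i0 → |hAbar.eigenvalues j| ≤ lam - dlam)
    (hgap_eq : ∃ j, j ≠ i0 ∧ |hAbar.eigenvalues j| = lam - dlam)
    (xbar : Fin p → ℝ)
    (hxbar_eig : Abar.mulVec xbar = lam • xbar)
    (hxbar_norm : nrm2 xbar = 1)
    (F : Finset (Fin p)) (hFsupp : supp xbar ⊆ F) (hFcard : F.card = s)
    (hrho : rhoRes E s ≤ dlam / 2)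
    (gs : ℝ)
    (hgs : gs = (lam - dlam + rhoRes E s) / (lam - rhoRes E s)) :
    0 < (eigList ((hAbar.add hE).submatrix (Subtype.val : {i // i ∈ F} → Fin p))).headI ∧
      ∀ r ∈ (eigList ((hAbar.add hE).submatrix (Subtype.val : {i // i ∈ F} → Fin p))).tail,
        |r| ≤ gs * (eigList ((hAbar.add hE).submatrix (Subtype.val : {i // i ∈ F} → Fin p))).headI := by
  subst hFcard
  set ρ := rhoRes E F.card
  obtain ⟨j, -, hj⟩ := hgap_eq
  have hgap_nonneg : 0 ≤ lam - dlam := hj ▸ abs_nonneg _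
  have hsupp : Function.support xbar ⊆ Set.range (Subtype.val : {i // i ∈ F} → Fin p) :=
    fun i hi => ⟨⟨i, hFsupp (by simpa [supp] using hi)⟩, rfl⟩
  have hEF : ∀ u, |u ⬝ᵥ subm E F *ᵥ u| ≤ ρ * (u ⬝ᵥ u) :=
    (hE.submatrix Subtype.val).abs_dotProduct_mulVec_le fun j =>
      (abs_eigenvalues_le_specNorm _ j).trans (specNorm_subm_le_rhoRes E F)
  have hxx : xbar ⬝ᵥ xbar = 1 := by rw [dotProduct_self_eq_nrm2_sq, hxbar_norm, one_pow]
  have hcert : IsGapCertificate (subm (Abar + E) F) (xbar ∘ Subtype.val)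
      (lam - ρ) (lam - dlam + ρ) := by
    subst hi0
    rw [subm, submatrix_add]
    exact ((IsGapCertificate.of_eigenvector hAbar hxbar_eig hxx hgap_nonneg hgap_le
      (by linarith)).submatrix Subtype.val_injective hsupp).add hEF
  obtain ⟨hhead, htail⟩ := hcert.eigList_bounds ((hAbar.add hE).submatrix Subtype.val)
  have hden : 0 < lam - ρ := by linarith
  refine ⟨hden.trans_le hhead, fun r hr => (htail r hr).trans ?_⟩
  have hgs₀ : 0 ≤ gs := hgs ▸ div_nonneg ((abs_nonneg r).trans (htail r hr)) hden.le
  calc lam - dlam + ρ = gs * (lam - ρ) := by rw [hgs, div_mul_cancel₀ _ hden.ne']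
    _ ≤ _ := mul_le_mul_of_nonneg_left hhead hgs₀

theorem statement2 (p kbar s : ℕ)
    (Abar E : Matrix (Fin p) (Fin p) ℝ)
    (hAbar : Abar.IsHermitian) (hE : E.IsHermitian)
    (lam dlam : ℝ) (i0 : Fin p)
    (hi0 : hAbar.eigenvalues i0 = lam)
    (hlam_pos : 0 < lam) (hdlam_pos : 0 < dlam)
    (hgap_le : ∀ j, j ≠ i0 → |hAbar.eigenvalues j| ≤ lam - dlam)
    (hgap_eq : ∃ j, j ≠ i0 ∧ |hAbar.eigenvalues j| = lam - dlam)
    (xbar : Fin p → ℝ)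
    (hxbar_eig : Abar.mulVec xbar = lam • xbar)
    (hxbar_norm : nrm2 xbar = 1)
    (hxbar_supp : (supp xbar).card = kbar)
    (F : Finset (Fin p)) (hFsupp : supp xbar ⊆ F) (hFcard : F.card = s)
    (hrho : rhoRes E s ≤ dlam / 2)
    (gs : ℝ)
    (hgs : gs = (lam - dlam + rhoRes E s) / (lam - rhoRes E s)) :
    0 < (eigList ((hAbar.add hE).submatrix (Subtype.val : {i // i ∈ F} → Fin p))).headI ∧
      ∀ r ∈ (eigList ((hAbar.add hE).submatrix (Subtype.val : {i // i ∈ F} → Fin p))).tail,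
        |r| ≤ gs * (eigList ((hAbar.add hE).submatrix (Subtype.val : {i // i ∈ F} → Fin p))).headI :=
  statement2_general p s Abar E hAbar hE lam dlam i0 hi0 hdlam_pos hgap_le hgap_eq xbar hxbar_eig
    hxbar_norm F hFsupp hFcard hrho gs hgs

end TPaper
end

section
/- Let A be a p×p real symmetric matrix whose eigenvalue of largest absolute value is nonzero and simple in absolute value, let y be a unit eigenvector for this eigenvalue, and let γ < 1 be the ratio of the second largest to the largest eigenvalue of A in absolute value. If x is a unit vector with yᵀx > 0 and Ax ≠ 0, then x' = Ax/‖Ax‖ satisfies |yᵀx'| ≥ |yᵀx| / √(1 - (1-γ²)(1-(yᵀx)²)). -/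
lemma abs_div_sqrt_le_abs_mul_div {t l s E : ℝ} (hs : 0 < s) (hsE : s ^ 2 ≤ l ^ 2 * E) :
    |t| / √E ≤ |l * t| / s := by
  have hsle : s ≤ |l| * √E := by
    calc s = √(s ^ 2) := (Real.sqrt_sq hs.le).symm
      _ ≤ √(l ^ 2 * E) := Real.sqrt_le_sqrt hsE
      _ = |l| * √E := by rw [Real.sqrt_mul (sq_nonneg l), Real.sqrt_sq_eq_abs]
  have hE : 0 < √E := pos_of_mul_pos_right (hs.trans_le hsle) (abs_nonneg l)
  rw [div_le_div_iff₀ hE hs, abs_mul]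
  calc |t| * s ≤ |t| * (|l| * √E) := mul_le_mul_of_nonneg_left hsle (abs_nonneg t)
    _ = |l| * |t| * √E := by ring

section Spectral

variable {n : Type*} [Fintype n]

lemma sum_sq_mul_le_of_abs_le {c μ : n → ℝ} {g : ℝ} (i₀ : n) (hc : ∑ i, c i ^ 2 = 1)
    (hμ : ∀ j, j ≠ i₀ → |μ j| ≤ g) :
    ∑ i, (μ i * c i) ^ 2 ≤ (μ i₀ * c i₀) ^ 2 + g ^ 2 * (1 - c i₀ ^ 2) := by
  classical
  have hrest : 1 - c i₀ ^ 2 = ∑ j ∈ Finset.univ.erase i₀, c j ^ 2 := by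
    rw [← hc, ← Finset.add_sum_erase _ _ (Finset.mem_univ i₀), add_sub_cancel_left]
  rw [hrest, Finset.mul_sum, ← Finset.add_sum_erase _ _ (Finset.mem_univ i₀)]
  gcongr with j hj
  have hμj := hμ j (Finset.ne_of_mem_erase hj)
  rw [mul_pow]
  exact mul_le_mul_of_nonneg_right (sq_le_sq' (neg_le_of_abs_le hμj) (le_of_abs_le hμj))
    (sq_nonneg _)

lemma OrthonormalBasis.dotProduct_eq_sum_mul (b : OrthonormalBasis n ℝ (EuclideanSpace ℝ n))
    (u v : n → ℝ) : u ⬝ᵥ v = ∑ i, (⇑(b i) ⬝ᵥ u) * (⇑(b i) ⬝ᵥ v) := by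
  have h := b.sum_inner_mul_inner (WithLp.toLp 2 u) (WithLp.toLp 2 v)
  simp only [EuclideanSpace.inner_eq_star_dotProduct, star_trivial] at h
  simpa [dotProduct_comm, mul_comm] using h.symm

namespace Matrix

variable {A : Matrix n n ℝ}

lemma IsHermitian.dotProduct_mulVec_comm (hA : A.IsHermitian) (u v : n → ℝ) :
    u ⬝ᵥ A *ᵥ v = A *ᵥ u ⬝ᵥ v := by
  rw [← dotProduct_transpose_mulVec, (isHermitian_iff_isSymm.mp hA).eq, dotProduct_comm]

variable [DecidableEq n]

lemma IsHermitian.eigenvectorBasis_dotProduct_mulVec_s5 (hA : A.IsHermitian) (i : n) (w : n → ℝ) :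
    ⇑(hA.eigenvectorBasis i) ⬝ᵥ A *ᵥ w = hA.eigenvalues i * (⇑(hA.eigenvectorBasis i) ⬝ᵥ w) := by
  rw [hA.dotProduct_mulVec_comm, hA.mulVec_eigenvectorBasis, smul_dotProduct, smul_eq_mul]

lemma IsHermitian.eigenvectorBasis_dotProduct_eq_zero (hA : A.IsHermitian) {μ : ℝ} {y : n → ℝ}
    (hy : A *ᵥ y = μ • y) {i : n} (hi : hA.eigenvalues i ≠ μ) :
    ⇑(hA.eigenvectorBasis i) ⬝ᵥ y = 0 := by
  have h := hA.eigenvectorBasis_dotProduct_mulVec_s5 i y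
  rw [hy, dotProduct_smul, smul_eq_mul] at h
  have h' : (hA.eigenvalues i - μ) * (⇑(hA.eigenvectorBasis i) ⬝ᵥ y) = 0 := by
    rw [sub_mul]; linarith
  exact (mul_eq_zero.mp h').resolve_left (sub_ne_zero.mpr hi)

lemma IsHermitian.sq_dotProduct_eq_of_mulVec_eq_smul (hA : A.IsHermitian) {μ : ℝ} {i₀ : n}
    (hsimple : ∀ j, j ≠ i₀ → hA.eigenvalues j ≠ μ) {y : n → ℝ} (hy : A *ᵥ y = μ • y)
    (hyy : y ⬝ᵥ y = 1) (x : n → ℝ) :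
    (y ⬝ᵥ x) ^ 2 = (⇑(hA.eigenvectorBasis i₀) ⬝ᵥ x) ^ 2 := by
  set b := hA.eigenvectorBasis
  have hcoord (v : n → ℝ) : y ⬝ᵥ v = (⇑(b i₀) ⬝ᵥ y) * (⇑(b i₀) ⬝ᵥ v) := by
    rw [b.dotProduct_eq_sum_mul, Finset.sum_eq_single i₀ (fun j _ hj => by
      rw [hA.eigenvectorBasis_dotProduct_eq_zero hy (hsimple j hj), zero_mul])
      (by simp)]
  have hy₀ : (⇑(b i₀) ⬝ᵥ y) ^ 2 = 1 := by rw [sq, ← hcoord, hyy]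
  rw [hcoord x, mul_pow, hy₀, one_mul]

lemma IsHermitian.mulVec_dotProduct_self_eq_sum (hA : A.IsHermitian) (x : n → ℝ) :
    A *ᵥ x ⬝ᵥ A *ᵥ x = ∑ i, (hA.eigenvalues i * (⇑(hA.eigenvectorBasis i) ⬝ᵥ x)) ^ 2 := by
  simp only [hA.eigenvectorBasis.dotProduct_eq_sum_mul (A *ᵥ x),
    hA.eigenvectorBasis_dotProduct_mulVec_s5, sq]

lemma IsHermitian.mulVec_dotProduct_self_le (hA : A.IsHermitian) {i₀ : n} {g : ℝ}
    (hgap : ∀ j, j ≠ i₀ → |hA.eigenvalues j| ≤ g) {x : n → ℝ} (hx : x ⬝ᵥ x = 1) :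
    A *ᵥ x ⬝ᵥ A *ᵥ x ≤ (hA.eigenvalues i₀ * (⇑(hA.eigenvectorBasis i₀) ⬝ᵥ x)) ^ 2
      + g ^ 2 * (1 - (⇑(hA.eigenvectorBasis i₀) ⬝ᵥ x) ^ 2) := by
  rw [hA.mulVec_dotProduct_self_eq_sum]
  refine sum_sq_mul_le_of_abs_le i₀ ?_ hgap
  rw [← hx, hA.eigenvectorBasis.dotProduct_eq_sum_mul x x]
  simp only [sq]

end Matrix

end Spectral

namespace TPaper

open Matrix

lemma dotp_eq_dotProduct {p : ℕ} (x y : Fin p → ℝ) : dotp x y = x ⬝ᵥ y := rfl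

lemma nrm2_eq_sqrt_dotProduct {p : ℕ} (x : Fin p → ℝ) : nrm2 x = √(x ⬝ᵥ x) := by
  simp only [nrm2, dotProduct, sq]

lemma nrm2_sq {p : ℕ} (x : Fin p → ℝ) : nrm2 x ^ 2 = x ⬝ᵥ x := by
  rw [nrm2_eq_sqrt_dotProduct, Real.sq_sqrt (by simpa using dotProduct_star_self_nonneg x)]

lemma dotProduct_self_eq_one_of_nrm2_eq_one {p : ℕ} {x : Fin p → ℝ} (hx : nrm2 x = 1) :
    x ⬝ᵥ x = 1 := by
  rw [← nrm2_sq, hx, one_pow]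

lemma nrm2_pos {p : ℕ} {x : Fin p → ℝ} (hx : x ≠ 0) : 0 < nrm2 x := by
  rw [nrm2_eq_sqrt_dotProduct, Real.sqrt_pos]
  simpa using dotProduct_self_star_pos_iff.mpr hx

theorem statement5_general (p : ℕ)
    (A : Matrix (Fin p) (Fin p) ℝ) (hA : A.IsHermitian)
    (lam : ℝ) (i0 : Fin p)
    (hi0 : hA.eigenvalues i0 = lam) (hlam : lam ≠ 0)
    (gamma : ℝ) (hglt : gamma < 1)
    (hga : ∀ j, j ≠ i0 → |hA.eigenvalues j| ≤ gamma * |lam|)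
    (y : Fin p → ℝ) (hy : A.mulVec y = lam • y) (hyn : nrm2 y = 1)
    (x : Fin p → ℝ) (hxn : nrm2 x = 1) :
    |dotp y x| / Real.sqrt (1 - (1 - gamma ^ 2) * (1 - (dotp y x) ^ 2)) ≤
      |dotp y ((nrm2 (A.mulVec x))⁻¹ • A.mulVec x)| := by
  simp only [dotp_eq_dotProduct]
  rcases eq_or_ne (y ⬝ᵥ x) 0 with ht | ht
  · rw [ht, abs_zero, zero_div]
    exact abs_nonneg _
  have hsimple : ∀ j, j ≠ i0 → hA.eigenvalues j ≠ lam := fun j hj hjlam => by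
    have := hga j hj
    rw [hjlam] at this
    linarith [mul_lt_of_lt_one_left (abs_pos.mpr hlam) hglt]
  have hyy := dotProduct_self_eq_one_of_nrm2_eq_one hyn
  have hxx := dotProduct_self_eq_one_of_nrm2_eq_one hxn
  have hyx_sq := hA.sq_dotProduct_eq_of_mulVec_eq_smul hsimple hy hyy x
  have hAx_sq : A *ᵥ x ⬝ᵥ A *ᵥ x ≤ lam ^ 2 * (1 - (1 - gamma ^ 2) * (1 - (y ⬝ᵥ x) ^ 2)) := by
    have := hA.mulVec_dotProduct_self_le hga hxx
    rw [hi0, mul_pow, mul_pow, sq_abs, ← hyx_sq] at this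
    linarith
  have hyAx : y ⬝ᵥ A *ᵥ x = lam * (y ⬝ᵥ x) := by
    rw [hA.dotProduct_mulVec_comm, hy, smul_dotProduct, smul_eq_mul]
  have hs : 0 < nrm2 (A *ᵥ x) := nrm2_pos fun h0 => by
    rw [h0, dotProduct_zero] at hyAx
    exact mul_ne_zero hlam ht hyAx.symm
  rw [dotProduct_smul, hyAx, smul_eq_mul, abs_mul, abs_inv, abs_of_pos hs, inv_mul_eq_div]
  exact abs_div_sqrt_le_abs_mul_div hs (by rw [nrm2_sq]; exact hAx_sq)

theorem statement5 (p : ℕ)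
    (A : Matrix (Fin p) (Fin p) ℝ) (hA : A.IsHermitian)
    (lam : ℝ) (i0 : Fin p)
    (hi0 : hA.eigenvalues i0 = lam) (hlam : lam ≠ 0)
    (gamma : ℝ) (hglt : gamma < 1)
    (hga : ∀ j, j ≠ i0 → |hA.eigenvalues j| ≤ gamma * |lam|)
    (hgeq : ∃ j, j ≠ i0 ∧ |hA.eigenvalues j| = gamma * |lam|)
    (y : Fin p → ℝ) (hy : A.mulVec y = lam • y) (hyn : nrm2 y = 1)
    (x : Fin p → ℝ) (hxn : nrm2 x = 1)
    (hyx : 0 < dotp y x) (hAx : A.mulVec x ≠ 0) :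
    |dotp y x| / Real.sqrt (1 - (1 - gamma ^ 2) * (1 - (dotp y x) ^ 2)) ≤
      |dotp y ((nrm2 (A.mulVec x))⁻¹ • A.mulVec x)| :=
  statement5_general p A hA lam i0 hi0 hlam gamma hglt hga y hy hyn x hxn

end TPaper
end

section
/- Let x̄ be a unit vector in ℝ^p whose support F̄ has cardinality k̄, let y be a unit vector in ℝ^p, let k be an integer with k̄ < k ≤ p, and let F be a top-k index set for y. Then |Truncate(y,F)ᵀ x̄| ≥ |yᵀx̄| - √(k̄/k) · min[1, (1 + √(k̄/k)) · (1 - (yᵀx̄)²)]. -/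
namespace TPaper

/-!
Split `yᵀx̄` over the support `F̄` of `x̄`: the part on `F̄ ∩ F` is `Truncate(y,F)ᵀx̄`, the rest
is an error `e` on `F̄ \ F` with `|e| ≤ ‖y_{F̄\F}‖ ‖x̄_{F̄\F}‖` by Cauchy–Schwarz. As `F` holds the
`k` largest entries of `y` and `|F̄| = k̄ ≤ k`, we get `k ‖y_{F̄\F}‖² ≤ k̄ ‖y_{F\F̄}‖²`, so with
`t = k̄/k` at most a fraction `κ² = t/(1+t)` of the mass of `y` on `F △ F̄` lies in `F̄ \ F`.
This gives `|e| ≤ √t` directly. Moreover, writing `σ = ‖y_{F△F̄}‖ ‖x̄_{F̄\F}‖`, Cauchy–Schwarz on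
both parts gives `|yᵀx̄| ≤ 1 - (1-κ)σ`, which forces `1 - (yᵀx̄)² ≥ (1-κ²)σ = σ/(1+t)`; hence
`|e| ≤ κσ ≤ √t (1+√t) (1 - (yᵀx̄)²)`.
-/

open Finset

lemma sqrt_mul_le_sqrt_div_mul_sqrt {t u w β : ℝ} (ht : 0 ≤ t) (hβ : 0 ≤ β)
    (h : u ≤ t * w) :
    √(u * β) ≤ √(t / (1 + t)) * √((u + w) * β) := by
  rw [← Real.sqrt_mul (by positivity), ← mul_assoc]
  refine Real.sqrt_le_sqrt (mul_le_mul_of_nonneg_right ?_ hβ)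
  rw [div_mul_eq_mul_div, le_div_iff₀ (by linarith)]
  linarith

lemma sqrt_mul_le_one_sub_sqrt_mul {v α r β : ℝ} (hv : 0 ≤ v) (hα : 0 ≤ α) (hr : 0 ≤ r)
    (hβ : 0 ≤ β) (hvr : v + r ≤ 1) (hαβ : α + β ≤ 1) : √(v * α) ≤ 1 - √(r * β) := by
  have hrβ : r * β ≤ 1 := mul_le_one₀ (by linarith) hβ (by linarith)
  rw [Real.sqrt_le_left (by simpa using hrβ)]
  have hamgm : 2 * √(r * β) ≤ r + β := by
    rw [Real.sqrt_mul hr]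
    nlinarith [sq_nonneg (√r - √β), Real.sq_sqrt hr, Real.sq_sqrt hβ]
  calc v * α ≤ (1 - r) * (1 - β) := mul_le_mul (by linarith) (by linarith) hα (by linarith)
    _ ≤ (1 - √(r * β)) ^ 2 := by nlinarith [Real.sq_sqrt (mul_nonneg hr hβ)]

lemma one_sub_sq_mul_le_one_sub_sq {κ σ a : ℝ} (hσ0 : 0 ≤ σ) (hσ1 : σ ≤ 1)
    (ha : |a| ≤ 1 - (1 - κ) * σ) : (1 - κ ^ 2) * σ ≤ 1 - a ^ 2 := by
  have hsq : a ^ 2 ≤ (1 - (1 - κ) * σ) ^ 2 := by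
    simpa only [sq_abs] using pow_le_pow_left₀ (abs_nonneg a) ha 2
  nlinarith [mul_nonneg (mul_nonneg (sq_nonneg (1 - κ)) hσ0) (sub_nonneg.2 hσ1)]

lemma sqrt_div_one_add_mul_le {t : ℝ} (ht : 0 ≤ t) :
    √(t / (1 + t)) * (1 + t) ≤ √t * (1 + √t) := by
  have h1t : √(1 + t) ^ 2 = 1 + t := Real.sq_sqrt (by linarith)
  have hpos : 0 < √(1 + t) := Real.sqrt_pos.2 (by linarith)
  have hle : √(1 + t) ≤ 1 + √t := by
    rw [Real.sqrt_le_left (by positivity)]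
    nlinarith [Real.sq_sqrt ht, Real.sqrt_nonneg t]
  calc √(t / (1 + t)) * (1 + t) = √t * √(1 + t) := by
        rw [Real.sqrt_div ht, div_mul_eq_mul_div, div_eq_iff hpos.ne', mul_assoc, ← sq, h1t]
    _ ≤ √t * (1 + √t) := mul_le_mul_of_nonneg_left hle (Real.sqrt_nonneg t)

/-- `u, v, w` are the squared norms of `y` on `F̄ \ F`, `F̄ ∩ F`, `F \ F̄`, and `α, β` those of
`x̄` on `F̄ ∩ F`, `F̄ \ F`. -/
lemma sqrt_mul_le_of_abs_le {t u v w α β a : ℝ} (ht : 0 ≤ t) (hu : 0 ≤ u) (hv : 0 ≤ v)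
    (hw : 0 ≤ w) (hα : 0 ≤ α) (hβ : 0 ≤ β) (hutw : u ≤ t * w) (hy : u + v + w ≤ 1)
    (hx : α + β ≤ 1) (ha : |a| ≤ √(v * α) + √(u * β)) :
    √(u * β) ≤ √t * min 1 ((1 + √t) * (1 - a ^ 2)) := by
  set κ := √(t / (1 + t))
  set σ := √((u + w) * β)
  have hσ1 : σ ≤ 1 := Real.sqrt_le_one.2 (mul_le_one₀ (by linarith) hβ (by linarith))
  have hκσ : √(u * β) ≤ κ * σ := sqrt_mul_le_sqrt_div_mul_sqrt ht hβ hutw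
  have hvα : √(v * α) ≤ 1 - σ :=
    sqrt_mul_le_one_sub_sqrt_mul hv hα (by linarith) hβ (by linarith) hx
  have ha' : (1 - κ ^ 2) * σ ≤ 1 - a ^ 2 :=
    one_sub_sq_mul_le_one_sub_sq (Real.sqrt_nonneg _) hσ1 (by linarith)
  have hκ1 : κ ^ 2 ≤ 1 := by
    rw [Real.sq_sqrt (by positivity)]; exact (div_le_one (by linarith)).2 (by linarith)
  have hκ2 : (1 - κ ^ 2) * (1 + t) = 1 := by
    rw [Real.sq_sqrt (by positivity)]; field_simp; ring
  rw [mul_min_of_nonneg _ _ (Real.sqrt_nonneg t), mul_one]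
  refine le_min (Real.sqrt_le_sqrt ?_) ?_
  · calc u * β ≤ u := mul_le_of_le_one_right hu (by linarith)
      _ ≤ t * w := hutw
      _ ≤ t := mul_le_of_le_one_right ht (by linarith)
  · have h1a : 0 ≤ 1 - a ^ 2 :=
      (mul_nonneg (sub_nonneg.2 hκ1) (Real.sqrt_nonneg _)).trans ha'
    calc √(u * β) ≤ κ * σ := hκσ
      _ = κ * (1 + t) * ((1 - κ ^ 2) * σ) := by linear_combination (-(κ * σ)) * hκ2
      _ ≤ κ * (1 + t) * (1 - a ^ 2) := by gcongr
      _ ≤ √t * (1 + √t) * (1 - a ^ 2) :=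
        mul_le_mul_of_nonneg_right (sqrt_div_one_add_mul_le ht) h1a
      _ = √t * ((1 + √t) * (1 - a ^ 2)) := mul_assoc _ _ _

section Finsets

lemma abs_sum_mul_le_sqrt_mul {ι : Type*} (s : Finset ι) (f g : ι → ℝ) :
    |∑ i ∈ s, f i * g i| ≤ √((∑ i ∈ s, f i ^ 2) * ∑ i ∈ s, g i ^ 2) := by
  rw [← Real.sqrt_sq_eq_abs]
  exact Real.sqrt_le_sqrt (sum_mul_sq_le_sq_mul_sq s f g)

variable {ι : Type*} [DecidableEq ι]

lemma sum_sdiff_add_sum_inter_add_sum_sdiff_le [Fintype ι] {f : ι → ℝ} (hf : ∀ i, 0 ≤ f i)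
    (F G : Finset ι) :
    ∑ i ∈ G \ F, f i + ∑ i ∈ G ∩ F, f i + ∑ i ∈ F \ G, f i ≤ ∑ i, f i := by
  rw [add_comm (∑ i ∈ G \ F, f i), sum_inter_add_sum_sdiff, ← sum_union disjoint_sdiff]
  exact sum_le_univ_sum_of_nonneg hf

lemma card_mul_sum_sdiff_le_card_mul_sum_sdiff {f : ι → ℝ} (hf : ∀ i, 0 ≤ f i)
    {F G : Finset ι} (htop : ∀ i ∈ F, ∀ j ∉ F, f j ≤ f i) (hGF : #G ≤ #F) :
    #F * ∑ i ∈ G \ F, f i ≤ #G * ∑ i ∈ F \ G, f i := by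
  rcases F.eq_empty_or_nonempty with rfl | hF
  · simp [card_eq_zero.1 (Nat.le_zero.1 hGF)]
  obtain ⟨i₀, hi₀, hmin⟩ := F.exists_min_image f hF
  have hGF' : #(G \ F) ≤ #(F \ G) := by
    have := card_sdiff_add_card_inter G F
    have := card_sdiff_add_card_inter F G
    rw [inter_comm] at this
    omega
  have hGsplit : (#G : ℝ) = #(G \ F) + #(G ∩ F) := by
    rw [← card_sdiff_add_card_inter G F]; push_cast; ring
  have hFsplit : (#F : ℝ) = #(F \ G) + #(G ∩ F) := by
    rw [← card_sdiff_add_card_inter F G, inter_comm]; push_cast; ring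
  have hout : ∑ i ∈ G \ F, f i ≤ #(G \ F) * f i₀ := by
    simpa using sum_le_card_nsmul (G \ F) f (f i₀)
      fun j hj ↦ htop i₀ hi₀ j (mem_sdiff.1 hj).2
  have hin : #(F \ G) * f i₀ ≤ ∑ i ∈ F \ G, f i := by
    simpa using card_nsmul_le_sum (F \ G) f (f i₀) fun j hj ↦ hmin j (mem_sdiff.1 hj).1
  have hcard : (#F : ℝ) * #(G \ F) ≤ #G * #(F \ G) := by
    rw [hGsplit, hFsplit]
    nlinarith [(Nat.cast_le (α := ℝ)).2 hGF', Nat.cast_nonneg (α := ℝ) #(G ∩ F)]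
  calc (#F : ℝ) * ∑ i ∈ G \ F, f i ≤ #F * (#(G \ F) * f i₀) := by gcongr
    _ ≤ #G * (#(F \ G) * f i₀) := by
      rw [← mul_assoc, ← mul_assoc]; exact mul_le_mul_of_nonneg_right hcard (hf i₀)
    _ ≤ #G * ∑ i ∈ F \ G, f i := by gcongr

end Finsets

section Vectors

variable {p : ℕ}

lemma sum_sq_eq_one_of_nrm2_eq_one {x : Fin p → ℝ} (hx : nrm2 x = 1) : ∑ i, x i ^ 2 = 1 :=
  Real.sqrt_eq_one.1 hx

lemma dotp_eq_sum_supp (x y : Fin p → ℝ) : dotp y x = ∑ i ∈ supp x, y i * x i :=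
  (sum_filter_of_ne fun _ _ h ↦ right_ne_zero_of_mul h).symm

lemma dotp_trunc_eq_sum_inter (x y : Fin p → ℝ) (F : Finset (Fin p)) :
    dotp (Trunc y F) x = ∑ i ∈ supp x ∩ F, y i * x i := by
  simp only [dotp_eq_sum_supp x, Trunc, ite_mul, zero_mul, sum_ite_mem]

lemma dotp_sub_dotp_trunc (x y : Fin p → ℝ) (F : Finset (Fin p)) :
    dotp y x - dotp (Trunc y F) x = ∑ i ∈ supp x \ F, y i * x i := by
  rw [dotp_trunc_eq_sum_inter, dotp_eq_sum_supp, ← sum_inter_add_sum_sdiff (supp x) F]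
  ring

lemma abs_dotp_sub_abs_dotp_trunc_le {x y : Fin p → ℝ} (hx : nrm2 x = 1) (hy : nrm2 y = 1)
    (F : Finset (Fin p)) {t : ℝ} (ht : 0 ≤ t)
    (hmass : ∑ i ∈ supp x \ F, y i ^ 2 ≤ t * ∑ i ∈ F \ supp x, y i ^ 2) :
    |dotp y x| - √t * min 1 ((1 + √t) * (1 - dotp y x ^ 2)) ≤ |dotp (Trunc y F) x| := by
  set G := supp x
  have hin : |dotp (Trunc y F) x| ≤ √((∑ i ∈ G ∩ F, y i ^ 2) * ∑ i ∈ G ∩ F, x i ^ 2) := by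
    rw [dotp_trunc_eq_sum_inter]; exact abs_sum_mul_le_sqrt_mul _ _ _
  have hout : |dotp y x - dotp (Trunc y F) x| ≤
      √((∑ i ∈ G \ F, y i ^ 2) * ∑ i ∈ G \ F, x i ^ 2) := by
    rw [dotp_sub_dotp_trunc]; exact abs_sum_mul_le_sqrt_mul _ _ _
  have htri := abs_sub_abs_le_abs_sub (dotp y x) (dotp (Trunc y F) x)
  have hx1 : ∑ i ∈ G ∩ F, x i ^ 2 + ∑ i ∈ G \ F, x i ^ 2 ≤ 1 := by
    rw [sum_inter_add_sum_sdiff, ← sum_sq_eq_one_of_nrm2_eq_one hx]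
    exact sum_le_univ_sum_of_nonneg fun i ↦ sq_nonneg _
  have hy1 := sum_sq_eq_one_of_nrm2_eq_one hy ▸
    sum_sdiff_add_sum_inter_add_sum_sdiff_le (fun i ↦ sq_nonneg (y i)) F G
  have key := sqrt_mul_le_of_abs_le ht (sum_nonneg fun i _ ↦ sq_nonneg (y i))
    (sum_nonneg fun i _ ↦ sq_nonneg (y i)) (sum_nonneg fun i _ ↦ sq_nonneg (y i))
    (sum_nonneg fun i _ ↦ sq_nonneg (x i)) (sum_nonneg fun i _ ↦ sq_nonneg (x i))
    hmass hy1 hx1 (by linarith)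
  linarith

end Vectors

theorem statement8_general (p kbar k : ℕ) (hk : kbar < k)
    (xbar y : Fin p → ℝ)
    (hxbar_norm : nrm2 xbar = 1) (hxbar_supp : (supp xbar).card = kbar)
    (hy_norm : nrm2 y = 1)
    (F : Finset (Fin p)) (hF : IsTopK y k F) :
    |dotp y xbar| - Real.sqrt ((kbar : ℝ) / k) *
        min 1 ((1 + Real.sqrt ((kbar : ℝ) / k)) * (1 - (dotp y xbar) ^ 2)) ≤
      |dotp (Trunc y F) xbar| := by
  obtain ⟨hFk, htop⟩ := hF
  have hk0 : (0 : ℝ) < k := by exact_mod_cast (Nat.zero_le kbar).trans_lt hk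
  have hcard := card_mul_sum_sdiff_le_card_mul_sum_sdiff (fun i ↦ sq_nonneg (y i))
    (fun i hi j hj ↦ sq_le_sq.2 (htop i hi j hj)) (hxbar_supp.trans_le (hFk ▸ hk.le))
  rw [hFk, hxbar_supp] at hcard
  refine abs_dotp_sub_abs_dotp_trunc_le hxbar_norm hy_norm F (by positivity) ?_
  rw [div_mul_eq_mul_div, le_div_iff₀ hk0]
  linarith

theorem statement8 (p kbar k : ℕ) (hk : kbar < k) (hkp : k ≤ p)
    (xbar y : Fin p → ℝ)
    (hxbar_norm : nrm2 xbar = 1) (hxbar_supp : (supp xbar).card = kbar)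
    (hy_norm : nrm2 y = 1)
    (F : Finset (Fin p)) (hF : IsTopK y k F) :
    |dotp y xbar| - Real.sqrt ((kbar : ℝ) / k) *
        min 1 ((1 + Real.sqrt ((kbar : ℝ) / k)) * (1 - (dotp y xbar) ^ 2)) ≤
      |dotp (Trunc y F) xbar| :=
  statement8_general p kbar k hk xbar y hxbar_norm hxbar_supp hy_norm F hF

end TPaper
end

section
/- Let A be an m×m real symmetric positive semidefinite matrix with m ≥ 2. Then there exists an index j ∈ {1,…,m} such that the principal submatrix A_{m\j} obtained by deleting the j-th row and column of A satisfies λ_max(A_{m\j}) ≥ ((m-1)/m) · λ_max(A). -/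
/-! Let `v` be a unit eigenvector for `λ_max(A)` and `j` an index minimising `v j ^ 2`, so that
`v j ^ 2 ≤ 1 / m`. Zeroing the `j`-th coordinate of `v` gives a vector `u` with
`u ⬝ v = ‖u‖² = 1 - v j ^ 2`. Positivity of `A` on the component of `u` orthogonal to `v` gives
`uᵀ A u ≥ λ_max(A) (u ⬝ v)²`, while `uᵀ A u ≤ λ_max(A_{m\j}) ‖u‖²` since `u` is supported off `j`.
Hence `λ_max(A_{m\j}) ≥ (1 - v j ^ 2) λ_max(A) ≥ (m - 1) / m · λ_max(A)`. -/

namespace TPaper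

open Matrix

section
variable {n : Type*} [Fintype n]

lemma mul_sq_dotProduct_le {A : Matrix n n ℝ} (hA : A.PosSemidef) {μ : ℝ} {v : n → ℝ}
    (hv : A *ᵥ v = μ • v) (hv1 : v ⬝ᵥ v = 1) (u : n → ℝ) :
    μ * (u ⬝ᵥ v) ^ 2 ≤ u ⬝ᵥ A *ᵥ u := by
  have hvu : v ⬝ᵥ A *ᵥ u = μ * (u ⬝ᵥ v) := by
    rw [dotProduct_mulVec, ← mulVec_transpose, ← conjTranspose_eq_transpose_of_trivial, hA.1, hv,
      smul_dotProduct, dotProduct_comm, smul_eq_mul]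
  have := hA.dotProduct_mulVec_nonneg (u - (u ⬝ᵥ v) • v)
  simp only [star_trivial, mulVec_sub, mulVec_smul, hv, sub_dotProduct, dotProduct_sub,
    smul_dotProduct, dotProduct_smul, smul_eq_mul, hvu, hv1] at this
  linarith

variable [DecidableEq n]

lemma le_maxEig_of_mem_spectrum {B : Matrix n n ℝ} {μ : ℝ} (h : μ ∈ spectrum ℝ B) :
    μ ≤ maxEig B :=
  le_csSup (finite_real_spectrum (A := B)).bddAbove h

lemma posSemidef_algebraMap_maxEig_sub {B : Matrix n n ℝ} (hB : B.IsHermitian) :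
    (algebraMap ℝ (Matrix n n ℝ) (maxEig B) - B).PosSemidef := by
  refine posSemidef_iff_isHermitian_and_spectrum_nonneg.mpr ⟨(isHermitian_diagonal _).sub hB, ?_⟩
  rw [← spectrum.singleton_sub_eq]
  rintro _ ⟨_, rfl, μ, hμ, rfl⟩
  exact sub_nonneg.mpr (le_maxEig_of_mem_spectrum hμ)

lemma dotProduct_mulVec_le_maxEig {B : Matrix n n ℝ} (hB : B.IsHermitian) (w : n → ℝ) :
    w ⬝ᵥ B *ᵥ w ≤ maxEig B * (w ⬝ᵥ w) := by
  simpa [sub_mulVec, Algebra.algebraMap_eq_smul_one, smul_mulVec, dotProduct_smul] using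
    (posSemidef_algebraMap_maxEig_sub hB).dotProduct_mulVec_nonneg w

lemma exists_eigenvector_maxEig [Nonempty n] {B : Matrix n n ℝ} (hB : B.IsHermitian) :
    ∃ v : n → ℝ, B *ᵥ v = maxEig B • v ∧ v ⬝ᵥ v = 1 := by
  have hmem : maxEig B ∈ spectrum ℝ B :=
    (hB.spectrum_real_eq_range_eigenvalues ▸ Set.range_nonempty _).csSup_mem finite_real_spectrum
  rw [hB.spectrum_real_eq_range_eigenvalues] at hmem
  obtain ⟨i, hi⟩ := hmem
  refine ⟨hB.eigenvectorBasis i, by rw [hB.mulVec_eigenvectorBasis, hi], ?_⟩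
  have h := real_inner_self_eq_norm_sq (hB.eigenvectorBasis i)
  rw [hB.eigenvectorBasis.orthonormal.1 i, EuclideanSpace.inner_eq_star_dotProduct] at h
  simpa using h

lemma maxEig_nonneg [Nonempty n] {A : Matrix n n ℝ} (hA : A.PosSemidef) : 0 ≤ maxEig A := by
  obtain ⟨v, hv, hv1⟩ := exists_eigenvector_maxEig hA.1
  simpa [hv, hv1] using hA.dotProduct_mulVec_nonneg v

lemma dotProduct_submatrix_mulVec (A : Matrix n n ℝ) (s : Finset n) (v : n → ℝ) :
    (fun i : s => v i) ⬝ᵥ A.submatrix (↑) (↑) *ᵥ (fun i : s => v i) =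
      s.piecewise v 0 ⬝ᵥ A *ᵥ s.piecewise v 0 := by
  have hpiece : ∀ f : n → ℝ, ∑ i, s.piecewise v 0 i * f i = ∑ i ∈ s, v i * f i := fun f => by
    simp [Finset.piecewise, ite_mul, Finset.sum_ite_mem]
  simp only [dotProduct, mulVec, submatrix_apply, hpiece, mul_comm (A _ _)]
  rw [← Finset.sum_coe_sort s]
  congr! 2 with i
  rw [← Finset.sum_coe_sort s]

lemma mul_sum_sq_le_maxEig_submatrix {A : Matrix n n ℝ} (hA : A.PosSemidef) {μ : ℝ}
    {v : n → ℝ} (hv : A *ᵥ v = μ • v) (hv1 : v ⬝ᵥ v = 1) (s : Finset n)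
    (hs : 0 < ∑ k ∈ s, v k ^ 2) :
    μ * ∑ k ∈ s, v k ^ 2 ≤ maxEig (A.submatrix ((↑) : s → n) (↑)) := by
  set S := ∑ k ∈ s, v k ^ 2
  have hrestrict : (fun i : s => v i) ⬝ᵥ (fun i : s => v i) = S := by
    simp only [dotProduct, ← sq]
    exact Finset.sum_coe_sort s (fun k => v k ^ 2)
  have hpiece : s.piecewise v 0 ⬝ᵥ v = S := by
    simp [dotProduct, Finset.piecewise, ite_mul, Finset.sum_ite_mem, S, sq]
  refine le_of_mul_le_mul_right ?_ hs
  calc μ * S * S = μ * (s.piecewise v 0 ⬝ᵥ v) ^ 2 := by rw [hpiece]; ring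
    _ ≤ s.piecewise v 0 ⬝ᵥ A *ᵥ s.piecewise v 0 := mul_sq_dotProduct_le hA hv hv1 _
    _ = (fun i : s => v i) ⬝ᵥ A.submatrix (↑) (↑) *ᵥ (fun i : s => v i) :=
      (dotProduct_submatrix_mulVec A s v).symm
    _ ≤ _ * S := hrestrict ▸ dotProduct_mulVec_le_maxEig (hA.1.submatrix _) _

end

theorem statement14 (m : ℕ) (hm : 2 ≤ m)
    (A : Matrix (Fin m) (Fin m) ℝ) (hA : A.PosSemidef) :
    ∃ j : Fin m,
      ((m : ℝ) - 1) / m * maxEig A ≤ maxEig (subm A (Finset.univ.erase j)) := by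
  have : Nonempty (Fin m) := ⟨⟨0, by omega⟩⟩
  obtain ⟨v, hv, hv1⟩ := exists_eigenvector_maxEig hA.1
  have hsum_sq : ∑ k, v k ^ 2 = 1 := by simpa [dotProduct, sq] using hv1
  obtain ⟨j, -, hj⟩ : ∃ j ∈ Finset.univ, (m : ℝ) * v j ^ 2 ≤ 1 :=
    Finset.exists_le_of_sum_le Finset.univ_nonempty (by simp [← Finset.mul_sum, hsum_sq])
  have hrest : ∑ k ∈ Finset.univ.erase j, v k ^ 2 = 1 - v j ^ 2 := by
    rw [← hsum_sq, Finset.sum_erase_eq_sub (Finset.mem_univ j)]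
  have hm' : (2 : ℝ) ≤ m := by exact_mod_cast hm
  have hvj : v j ^ 2 ≤ 1 / m := by rw [le_div_iff₀ (by positivity)]; linarith
  have hpos : 0 < 1 - v j ^ 2 := by
    have : (1 : ℝ) / m < 1 := (div_lt_one (by positivity)).mpr (by linarith)
    linarith
  refine ⟨j, ?_⟩
  calc ((m : ℝ) - 1) / m * maxEig A = (1 - 1 / m) * maxEig A := by field_simp
    _ ≤ (1 - v j ^ 2) * maxEig A := by gcongr; exact maxEig_nonneg hA
    _ ≤ _ := by
      rw [mul_comm, ← hrest]
      exact mul_sum_sq_le_maxEig_submatrix hA hv hv1 _ (hrest ▸ hpos)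

end TPaper
end

section
/- One iteration of the TPower-DkS method does not decrease the objective when W is positive semidefinite: let W be an n×n real symmetric positive semidefinite matrix, let π ∈ {0,1}^n be a binary vector with exactly k entries equal to 1, let F be a top-k index set for Wπ, and let π' ∈ {0,1}^n be the indicator vector of F. Then (π')ᵀW π' ≥ πᵀWπ. -/
/-! Write `π = 1_S` and `y = Wπ`. Since a positive semidefinite quadratic form lies above its
tangent planes, `π'ᵀWπ' - πᵀWπ ≥ 2 (π' - π)ᵀy = 2 (∑_{i ∈ F} yᵢ - ∑_{i ∈ S} yᵢ)`, and the right-hand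
side is nonnegative because `F` collects `k = |S|` largest entries of `y`. -/

namespace Finset

variable {ι M : Type*} [DecidableEq ι] [AddCommMonoid M] [LinearOrder M] [IsOrderedAddMonoid M]

/-- A single threshold `c` separates the values of `f` on `s \ t` from those on the equinumerous
`t \ s`. -/
lemma sum_le_sum_of_card_eq_of_forall_le {f : ι → M} {s t : Finset ι} (hcard : #s = #t)
    (htop : ∀ i ∈ t, ∀ j ∉ t, f j ≤ f i) : ∑ i ∈ s, f i ≤ ∑ i ∈ t, f i := by
  have hsdiff : #(s \ t) = #(t \ s) := card_sdiff_comm hcard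
  obtain ⟨c, hbelow, habove⟩ :
      ∃ c, (∀ j ∈ s \ t, f j ≤ c) ∧ ∀ i ∈ t \ s, c ≤ f i := by
    rcases (t \ s).eq_empty_or_nonempty with hempty | hne
    · have : s \ t = ∅ := card_eq_zero.mp (by rw [hsdiff, hempty, card_empty])
      exact ⟨0, by simp [this], by simp [hempty]⟩
    · refine ⟨(t \ s).inf' hne f, fun j hj => le_inf' hne f fun i hi => ?_,
        fun i hi => inf'_le f hi⟩
      exact htop i (mem_sdiff.mp hi).1 j (mem_sdiff.mp hj).2
  calc ∑ i ∈ s, f i = ∑ i ∈ s ∩ t, f i + ∑ i ∈ s \ t, f i := (sum_inter_add_sum_sdiff s t f).symm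
    _ ≤ ∑ i ∈ s ∩ t, f i + #(s \ t) • c := by grw [sum_le_card_nsmul _ _ _ hbelow]
    _ = ∑ i ∈ t ∩ s, f i + #(t \ s) • c := by rw [inter_comm, hsdiff]
    _ ≤ ∑ i ∈ t ∩ s, f i + ∑ i ∈ t \ s, f i := by grw [← card_nsmul_le_sum _ _ _ habove]
    _ = ∑ i ∈ t, f i := sum_inter_add_sum_sdiff t s f

end Finset

namespace Matrix

variable {n R : Type*} [Fintype n]

lemma IsSymm.dotProduct_mulVec_comm [CommSemiring R] {A : Matrix n n R} (hA : A.IsSymm)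
    (x y : n → R) : x ⬝ᵥ A *ᵥ y = y ⬝ᵥ A *ᵥ x := by
  rw [dotProduct_mulVec, dotProduct_comm, ← mulVec_transpose, hA.eq]

lemma ite_mem_dotProduct [DecidableEq n] [NonAssocSemiring R] (s : Finset n) (v : n → R) :
    (fun i => if i ∈ s then 1 else 0) ⬝ᵥ v = ∑ i ∈ s, v i := by
  simp [dotProduct, ite_mul, Finset.sum_ite_mem]

/-- The quadratic form of a positive semidefinite matrix lies above its tangent hyperplanes. -/
lemma PosSemidef.two_mul_sub_dotProduct_mulVec_le [CommRing R] [PartialOrder R] [StarRing R]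
    [TrivialStar R] [IsOrderedAddMonoid R] {A : Matrix n n R} (hA : A.PosSemidef) (x y : n → R) :
    2 * ((y - x) ⬝ᵥ A *ᵥ x) ≤ y ⬝ᵥ A *ᵥ y - x ⬝ᵥ A *ᵥ x := by
  have hsymm : A.IsSymm := isHermitian_iff_isSymm.mp hA.1
  have hnonneg : 0 ≤ (y - x) ⬝ᵥ A *ᵥ (y - x) := by
    simpa using hA.dotProduct_mulVec_nonneg (y - x)
  have hexpand : y ⬝ᵥ A *ᵥ y - x ⬝ᵥ A *ᵥ x
      = 2 * ((y - x) ⬝ᵥ A *ᵥ x) + (y - x) ⬝ᵥ A *ᵥ (y - x) := by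
    simp only [mulVec_sub, sub_dotProduct, dotProduct_sub, hsymm.dotProduct_mulVec_comm x y]
    ring
  rw [hexpand]
  exact le_add_of_nonneg_right hnonneg

end Matrix

namespace TPaper

open Matrix in
theorem statement16 (n k : ℕ)
    (W : Matrix (Fin n) (Fin n) ℝ) (hW : W.PosSemidef)
    (pi : Fin n → ℝ) (hbin : ∀ i, pi i = 0 ∨ pi i = 1)
    (hcard : (Finset.univ.filter fun i => pi i = 1).card = k)
    (F : Finset (Fin n)) (hFcard : F.card = k)
    (hFtop : ∀ i ∈ F, ∀ j ∉ F, W.mulVec pi j ≤ W.mulVec pi i)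
    (pi' : Fin n → ℝ) (hpi' : pi' = fun i => if i ∈ F then (1 : ℝ) else 0) :
    dotp pi (W.mulVec pi) ≤ dotp pi' (W.mulVec pi') := by
  set S := Finset.univ.filter fun i => pi i = 1
  set y := W *ᵥ pi
  have hpi : pi = fun i => if i ∈ S then 1 else 0 := by
    funext i
    rcases hbin i with h | h <;> simp [S, h]
  have hexchange : ∑ i ∈ S, y i ≤ ∑ i ∈ F, y i :=
    Finset.sum_le_sum_of_card_eq_of_forall_le (hcard.trans hFcard.symm) hFtop
  have hgain : 0 ≤ (pi' - pi) ⬝ᵥ y := by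
    rw [sub_dotProduct, hpi', hpi, ite_mem_dotProduct, ite_mem_dotProduct]
    exact sub_nonneg.mpr hexchange
  have htangent := hW.two_mul_sub_dotProduct_mulVec_le pi pi'
  change pi ⬝ᵥ y ≤ pi' ⬝ᵥ W *ᵥ pi'
  linarith

end TPaper
end
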